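/- Let E be a quantum channel from A to A', let R be a quantum channel from A' to A, and let {p_k, ρ_k}_{k∈K} be a test ensemble on A with |K| ≤ dim H_A. Let R_A be a reference system with dim H_{R_A} = dim H_A. Then √(∑_k p_k D_F(ρ_k, R(E(ρ_k)))²) ≤ max over states ρ on A⊗R_A of D_F(((R∘E)⊗id_{R_A})(ρ), ρ). -/

import Mathlib

open scoped Kronecker
open Matrix
open scoped ComplexOrder Classical

noncomputable section

/-- Positive semidefinite square root of a matrix (junk value `0` if not PSD). -/
noncomputable def matSqrt {n : Type*} [Fintype n] [DecidableEq n]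
    (A : Matrix n n ℂ) : Matrix n n ℂ :=
  if h : A.PosSemidef then
    (h.isHermitian.eigenvectorUnitary : Matrix n n ℂ) *
      Matrix.diagonal ((↑) ∘ Real.sqrt ∘ h.isHermitian.eigenvalues) *
      star (h.isHermitian.eigenvectorUnitary : Matrix n n ℂ)
  else 0

/-- A quantum state: a positive semidefinite matrix of unit trace. -/
def IsState {n : Type*} [Fintype n] [DecidableEq n] (ρ : Matrix n n ℂ) : Prop :=
  ρ.PosSemidef ∧ ρ.trace = 1

/-- Fidelity `F(ρ,σ) = Tr √(√σ ρ √σ)`. -/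
noncomputable def fidelity {n : Type*} [Fintype n] [DecidableEq n]
    (ρ σ : Matrix n n ℂ) : ℝ :=
  ((matSqrt (matSqrt σ * ρ * matSqrt σ)).trace).re

/-- Purified distance `D_F(ρ,σ) = √(1 − F(ρ,σ)²)`. -/
noncomputable def purifiedDist {n : Type*} [Fintype n] [DecidableEq n]
    (ρ σ : Matrix n n ℂ) : ℝ :=
  Real.sqrt (1 - (fidelity ρ σ) ^ 2)

/-- SLD quantum Fisher information
`𝔉_ρ(X) = 2 ∑_{i,j : λ_i+λ_j>0} ((λ_i−λ_j)²/(λ_i+λ_j)) |⟨i|X|j⟩|²`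
(junk value `0` if `ρ` is not Hermitian). -/
noncomputable def qFisher {n : Type*} [Fintype n] [DecidableEq n]
    (ρ X : Matrix n n ℂ) : ℝ :=
  if hρ : ρ.IsHermitian then
    2 * ∑ i, ∑ j,
      (if 0 < hρ.eigenvalues i + hρ.eigenvalues j then
        ((hρ.eigenvalues i - hρ.eigenvalues j) ^ 2 / (hρ.eigenvalues i + hρ.eigenvalues j)) *
          Complex.normSq (dotProduct (star ⇑(hρ.eigenvectorBasis i))
            (X *ᵥ ⇑(hρ.eigenvectorBasis j)))
      else 0)
  else 0

/-- Positive part of a Hermitian matrix (junk value `0` if not Hermitian). -/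
noncomputable def matPosPart {n : Type*} [Fintype n] [DecidableEq n]
    (W : Matrix n n ℂ) : Matrix n n ℂ :=
  if hW : W.IsHermitian then
    (hW.eigenvectorUnitary : Matrix n n ℂ) *
      Matrix.diagonal (fun i => ((max (hW.eigenvalues i) 0 : ℝ) : ℂ)) *
      star (hW.eigenvectorUnitary : Matrix n n ℂ)
  else 0

/-- Negative part of a Hermitian matrix (junk value `0` if not Hermitian). -/
noncomputable def matNegPart {n : Type*} [Fintype n] [DecidableEq n]
    (W : Matrix n n ℂ) : Matrix n n ℂ :=
  if hW : W.IsHermitian then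
    (hW.eigenvectorUnitary : Matrix n n ℂ) *
      Matrix.diagonal (fun i => ((max (-hW.eigenvalues i) 0 : ℝ) : ℂ)) *
      star (hW.eigenvectorUnitary : Matrix n n ℂ)
  else 0

/-- `Δ_W`: difference between the largest and smallest eigenvalues of a Hermitian matrix. -/
noncomputable def specSpread {n : Type*} [Fintype n] [DecidableEq n]
    (W : Matrix n n ℂ) : ℝ :=
  if hW : W.IsHermitian then (⨆ i, hW.eigenvalues i) - (⨅ i, hW.eigenvalues i) else 0

/-- Trace distance `T(ρ,σ) = ½(Tr (ρ−σ)₊ + Tr (ρ−σ)₋)`. -/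
noncomputable def traceDist {n : Type*} [Fintype n] [DecidableEq n]
    (ρ σ : Matrix n n ℂ) : ℝ :=
  (((matPosPart (ρ - σ)).trace).re + ((matNegPart (ρ - σ)).trace).re) / 2

/-- The dual (adjoint w.r.t. the trace pairing) of a linear map on matrices:
`Tr[(dualMap Φ W) ρ] = Tr[W Φ(ρ)]` for all `ρ` whenever `Φ` is linear. -/
noncomputable def dualMap {n m : Type*} [Fintype n] [DecidableEq n] [Fintype m] [DecidableEq m]
    (Φ : Matrix n n ℂ → Matrix m m ℂ) (W : Matrix m m ℂ) : Matrix n n ℂ :=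
  Matrix.of fun i j => (W * Φ (Matrix.single j i 1)).trace

/-- Partial trace over the second tensor factor. -/
def ptraceRight {α β : Type*} [Fintype β] (M : Matrix (α × β) (α × β) ℂ) : Matrix α α ℂ :=
  Matrix.of fun i j => ∑ k, M (i, k) (j, k)

/-- Partial trace over the first tensor factor. -/
def ptraceLeft {α β : Type*} [Fintype α] (M : Matrix (α × β) (α × β) ℂ) : Matrix β β ℂ :=
  Matrix.of fun i j => ∑ k, M (k, i) (k, j)

/-- A quantum channel: a map admitting a Kraus representation `{K_μ}` with
`∑_μ K_μ† K_μ = 1` (this entails complete positivity, trace preservation and linearity). -/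
def IsCPTP {n m : Type*} [Fintype n] [DecidableEq n] [Fintype m] [DecidableEq m]
    (Φ : Matrix n n ℂ → Matrix m m ℂ) : Prop :=
  ∃ (N : ℕ) (K : Fin N → Matrix m n ℂ),
    (∀ ρ, Φ ρ = ∑ μ, K μ * ρ * (K μ)ᴴ) ∧ (∑ μ, (K μ)ᴴ * K μ = 1)

/-- Tensor extension `Φ ⊗ id` of a map on matrices (correct for linear `Φ`). -/
noncomputable def tensorId {a b r : Type*} [Fintype a] [DecidableEq a]
    [Fintype b] [DecidableEq b] [Fintype r]
    (Φ : Matrix a a ℂ → Matrix b b ℂ)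
    (M : Matrix (a × r) (a × r) ℂ) : Matrix (b × r) (b × r) ℂ :=
  Matrix.of fun p q => Φ (Matrix.of fun i j => M (i, p.2) (j, q.2)) p.1 q.1

/-- Operator norm (ℓ²→ℓ²) of a matrix, as a supremum over unit vectors. -/
noncomputable def opNorm {n : Type*} [Fintype n] (M : Matrix n n ℂ) : ℝ :=
  sSup {x : ℝ | ∃ v : n → ℂ, (∑ i, Complex.normSq (v i)) = 1 ∧
    x = Real.sqrt (∑ i, Complex.normSq ((M *ᵥ v) i))}

end

/-!
Tensoring each `ρ_k` with a fixed state `τ` of the reference system produces an admissible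
input for the worst-case error: `(R ∘ E) ⊗ id` maps `ρ_k ⊗ τ` to `R(E(ρ_k)) ⊗ τ`, and the
fidelity is symmetric (because `Tr √(B Bᴴ) = Tr √(Bᴴ B)`) and unchanged when the same state is
appended to both arguments. Hence every `D_F(ρ_k, R(E(ρ_k)))` is bounded by the supremum, and
so is their `p`-weighted root mean square.
-/

open scoped MatrixOrder

section MatSqrt

variable {n : Type*} [Fintype n] [DecidableEq n]

lemma matSqrt_eq_cfcSqrt {A : Matrix n n ℂ} (hA : A.PosSemidef) : matSqrt A = CFC.sqrt A := by
  rw [matSqrt, dif_pos hA, CFC.sqrt_eq_cfc, cfc_nnreal_eq_real _ A, hA.1.cfc_eq]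
  simp only [IsHermitian.cfc, Unitary.conjStarAlgAut_apply]
  congr
  ext i
  simp only [Real.sqrt]

lemma posSemidef_matSqrt {A : Matrix n n ℂ} (hA : A.PosSemidef) : (matSqrt A).PosSemidef := by
  rw [matSqrt_eq_cfcSqrt hA]
  exact (CFC.sqrt_nonneg A).posSemidef

lemma matSqrt_mul_self {A : Matrix n n ℂ} (hA : A.PosSemidef) : matSqrt A * matSqrt A = A := by
  rw [matSqrt_eq_cfcSqrt hA]
  exact CFC.sqrt_mul_sqrt_self A hA.nonneg

lemma matSqrt_eq_of_mul_self_eq {A B : Matrix n n ℂ} (hB : B.PosSemidef) (h : B * B = A) :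
    matSqrt A = B := by
  have hA : A.PosSemidef := by
    rw [← h]; nth_rw 1 [← hB.1.eq]; exact posSemidef_conjTranspose_mul_self B
  rw [matSqrt_eq_cfcSqrt hA]
  exact CFC.sqrt_unique h hB.nonneg

lemma trace_matSqrt {A : Matrix n n ℂ} (hA : A.PosSemidef) :
    (matSqrt A).trace = ∑ i, (√(hA.1.eigenvalues i) : ℂ) := by
  rw [matSqrt, dif_pos hA, trace_mul_cycle,
    Matrix.mem_unitaryGroup_iff'.mp hA.1.eigenvectorUnitary.2, one_mul, trace_diagonal]
  rfl

lemma trace_matSqrt_mul_conjTranspose (B : Matrix n n ℂ) :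
    (matSqrt (B * Bᴴ)).trace = (matSqrt (Bᴴ * B)).trace := by
  have h := posSemidef_self_mul_conjTranspose B
  have h' := posSemidef_conjTranspose_mul_self B
  rw [trace_matSqrt h, trace_matSqrt h',
    (h.1.eigenvalues_eq_eigenvalues_iff h'.1).mpr (charpoly_mul_comm _ _)]

end MatSqrt

section Fidelity

variable {n : Type*} [Fintype n] [DecidableEq n] {r : Type*} [Fintype r] [DecidableEq r]

lemma fidelity_comm {ρ σ : Matrix n n ℂ} (hρ : ρ.PosSemidef) (hσ : σ.PosSemidef) :
    fidelity ρ σ = fidelity σ ρ := by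
  have hσ' := (posSemidef_matSqrt hσ).1.eq
  have hρ' := (posSemidef_matSqrt hρ).1.eq
  have hσρσ : matSqrt σ * ρ * matSqrt σ
      = (matSqrt σ * matSqrt ρ) * (matSqrt σ * matSqrt ρ)ᴴ := by
    rw [conjTranspose_mul, hσ', hρ']
    conv_lhs => rw [← matSqrt_mul_self hρ]
    simp only [mul_assoc]
  have hρσρ : matSqrt ρ * σ * matSqrt ρ
      = (matSqrt σ * matSqrt ρ)ᴴ * (matSqrt σ * matSqrt ρ) := by
    rw [conjTranspose_mul, hσ', hρ']
    conv_lhs => rw [← matSqrt_mul_self hσ]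
    simp only [mul_assoc]
  rw [fidelity, fidelity, hσρσ, hρσρ, trace_matSqrt_mul_conjTranspose]

lemma matSqrt_kronecker {A : Matrix n n ℂ} {B : Matrix r r ℂ} (hA : A.PosSemidef)
    (hB : B.PosSemidef) : matSqrt (A ⊗ₖ B) = matSqrt A ⊗ₖ matSqrt B :=
  matSqrt_eq_of_mul_self_eq ((posSemidef_matSqrt hA).kronecker (posSemidef_matSqrt hB)) <| by
    rw [← mul_kronecker_mul, matSqrt_mul_self hA, matSqrt_mul_self hB]

lemma IsState.kronecker {ρ : Matrix n n ℂ} {τ : Matrix r r ℂ} (hρ : IsState ρ)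
    (hτ : IsState τ) : IsState (ρ ⊗ₖ τ) :=
  ⟨hρ.1.kronecker hτ.1, by rw [trace_kronecker, hρ.2, hτ.2, mul_one]⟩

lemma exists_isState [Nonempty n] : ∃ τ : Matrix n n ℂ, IsState τ := by
  obtain ⟨i⟩ := ‹Nonempty n›
  refine ⟨diagonal (Pi.single i 1), posSemidef_diagonal_iff.mpr fun j => ?_, ?_⟩
  · rcases eq_or_ne j i with rfl | hji <;> simp [*]
  · simp [trace_diagonal]

lemma IsState.nonempty {ρ : Matrix n n ℂ} (hρ : IsState ρ) : Nonempty n := by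
  by_contra h
  have := hρ.2
  simp [trace, not_nonempty_iff.mp h] at this

lemma fidelity_kronecker_isState {ρ σ : Matrix n n ℂ} (hρ : ρ.PosSemidef) (hσ : σ.PosSemidef)
    {τ : Matrix r r ℂ} (hτ : IsState τ) : fidelity (ρ ⊗ₖ τ) (σ ⊗ₖ τ) = fidelity ρ σ := by
  have hmid : (matSqrt σ * ρ * matSqrt σ).PosSemidef := by
    simpa only [(posSemidef_matSqrt hσ).1.eq] using hρ.mul_mul_conjTranspose_same (matSqrt σ)
  have hτ_sq : matSqrt τ * τ * matSqrt τ = τ * τ := by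
    rw [← matSqrt_mul_self hτ.1, ← mul_assoc, matSqrt_mul_self hτ.1, mul_assoc,
      matSqrt_mul_self hτ.1]
  have hsqrt : matSqrt ((matSqrt σ * ρ * matSqrt σ) ⊗ₖ (τ * τ))
      = matSqrt (matSqrt σ * ρ * matSqrt σ) ⊗ₖ τ :=
    matSqrt_eq_of_mul_self_eq ((posSemidef_matSqrt hmid).kronecker hτ.1) <| by
      rw [← mul_kronecker_mul, matSqrt_mul_self hmid]
  rw [fidelity, fidelity, matSqrt_kronecker hσ hτ.1, ← mul_kronecker_mul, ← mul_kronecker_mul,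
    hτ_sq, hsqrt, trace_kronecker, hτ.2, mul_one]

end Fidelity

section Channel

variable {n m r : Type*} [Fintype n] [DecidableEq n] [Fintype m] [DecidableEq m] [Fintype r]

lemma IsCPTP.map_smul {Φ : Matrix n n ℂ → Matrix m m ℂ} (hΦ : IsCPTP Φ) (c : ℂ)
    (ρ : Matrix n n ℂ) : Φ (c • ρ) = c • Φ ρ := by
  obtain ⟨N, K, hK, -⟩ := hΦ
  simp only [hK, Finset.smul_sum, Matrix.mul_smul, Matrix.smul_mul]

lemma IsCPTP.posSemidef {Φ : Matrix n n ℂ → Matrix m m ℂ} (hΦ : IsCPTP Φ) {ρ : Matrix n n ℂ}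
    (hρ : ρ.PosSemidef) : (Φ ρ).PosSemidef := by
  obtain ⟨N, K, hK, -⟩ := hΦ
  rw [hK]
  exact posSemidef_sum _ fun μ _ => hρ.mul_mul_conjTranspose_same (K μ)

lemma tensorId_kronecker {Φ : Matrix n n ℂ → Matrix m m ℂ}
    (hΦ : ∀ (c : ℂ) (ρ : Matrix n n ℂ), Φ (c • ρ) = c • Φ ρ) (ρ : Matrix n n ℂ)
    (τ : Matrix r r ℂ) : tensorId Φ (ρ ⊗ₖ τ) = Φ ρ ⊗ₖ τ := by
  ext ⟨i, x⟩ ⟨j, y⟩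
  have hblock : (of fun i' j' => (ρ ⊗ₖ τ) (i', x) (j', y)) = τ x y • ρ := by
    ext i' j'
    simp [mul_comm]
  rw [tensorId, of_apply, hblock, hΦ, Matrix.smul_apply, kroneckerMap_apply, smul_eq_mul, mul_comm]

lemma purifiedDist_tensorId_kronecker [DecidableEq r] {Φ : Matrix n n ℂ → Matrix n n ℂ}
    (hΦ : ∀ (c : ℂ) (ρ : Matrix n n ℂ), Φ (c • ρ) = c • Φ ρ) {ρ : Matrix n n ℂ}
    (hρ : ρ.PosSemidef) (hΦρ : (Φ ρ).PosSemidef) {τ : Matrix r r ℂ} (hτ : IsState τ) :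
    purifiedDist (tensorId Φ (ρ ⊗ₖ τ)) (ρ ⊗ₖ τ) = purifiedDist ρ (Φ ρ) := by
  rw [tensorId_kronecker hΦ, purifiedDist, purifiedDist, fidelity_kronecker_isState hΦρ hρ hτ,
    fidelity_comm hΦρ hρ]

end Channel

lemma purifiedDist_nonneg {n : Type*} [Fintype n] [DecidableEq n] (ρ σ : Matrix n n ℂ) :
    0 ≤ purifiedDist ρ σ :=
  Real.sqrt_nonneg _

lemma purifiedDist_le_one {n : Type*} [Fintype n] [DecidableEq n] (ρ σ : Matrix n n ℂ) :
    purifiedDist ρ σ ≤ 1 :=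
  Real.sqrt_le_one.mpr (sub_le_self 1 (sq_nonneg _))

lemma Real.sqrt_sum_mul_sq_le_of_le {ι : Type*} [Fintype ι] {p f : ι → ℝ} {M : ℝ}
    (hp : ∀ k, 0 ≤ p k) (hpsum : ∑ k, p k = 1) (hf : ∀ k, 0 ≤ f k) (hfM : ∀ k, f k ≤ M)
    (hM : 0 ≤ M) : √(∑ k, p k * f k ^ 2) ≤ M := by
  calc √(∑ k, p k * f k ^ 2) ≤ √(∑ k, p k * M ^ 2) := by
        gcongr with k
        exacts [hp k, hf k, hfM k]
    _ = M := by rw [← Finset.sum_mul, hpsum, one_mul, Real.sqrt_sq hM]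

theorem statement_10_general
    {dA dA' dR : Type*} [Fintype dA] [DecidableEq dA] [Fintype dA'] [DecidableEq dA']
    [Fintype dR] [DecidableEq dR]
    (hdim : Fintype.card dR = Fintype.card dA)
    (Emap : Matrix dA dA ℂ → Matrix dA' dA' ℂ) (hE : IsCPTP Emap)
    (R : Matrix dA' dA' ℂ → Matrix dA dA ℂ) (hR : IsCPTP R)
    {K : Type*} [Fintype K]
    (p : K → ℝ) (ρs : K → Matrix dA dA ℂ)
    (hp : ∀ k, 0 < p k) (hpsum : ∑ k, p k = 1) (hρs : ∀ k, IsState (ρs k)) :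
    Real.sqrt (∑ k, p k * (purifiedDist (ρs k) (R (Emap (ρs k)))) ^ 2)
      ≤ sSup {x : ℝ | ∃ ρ : Matrix (dA × dR) (dA × dR) ℂ, IsState ρ ∧
          x = purifiedDist (tensorId (fun σ => R (Emap σ)) ρ) ρ} := by
  set S := {x : ℝ | ∃ ρ : Matrix (dA × dR) (dA × dR) ℂ, IsState ρ ∧
    x = purifiedDist (tensorId (fun σ => R (Emap σ)) ρ) ρ}
  have hS_bdd : BddAbove S := ⟨1, by rintro _ ⟨ρ, -, rfl⟩; exact purifiedDist_le_one _ _⟩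
  have hS_nonneg : 0 ≤ sSup S := Real.sSup_nonneg <| by
    rintro _ ⟨ρ, -, rfl⟩; exact purifiedDist_nonneg _ _
  have hmem : ∀ k, purifiedDist (ρs k) (R (Emap (ρs k))) ∈ S := by
    intro k
    have : Nonempty dA := (hρs k).nonempty
    have : Nonempty dR := Fintype.card_pos_iff.mp (hdim ▸ Fintype.card_pos)
    obtain ⟨τ, hτ⟩ := exists_isState (n := dR)
    refine ⟨ρs k ⊗ₖ τ, (hρs k).kronecker hτ, ?_⟩
    rw [purifiedDist_tensorId_kronecker (fun c ρ => by rw [hE.map_smul, hR.map_smul]) (hρs k).1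
      (hR.posSemidef (hE.posSemidef (hρs k).1)) hτ]
  exact Real.sqrt_sum_mul_sq_le_of_le (fun k => (hp k).le) hpsum (fun k => purifiedDist_nonneg _ _)
    (fun k => le_csSup hS_bdd (hmem k)) hS_nonneg

/-- the ensemble recovery error is bounded by the worst-case
entanglement-fidelity error. -/
theorem statement_10
    {dA dA' dR : Type*} [Fintype dA] [DecidableEq dA] [Fintype dA'] [DecidableEq dA']
    [Fintype dR] [DecidableEq dR]
    (hdim : Fintype.card dR = Fintype.card dA)
    (Emap : Matrix dA dA ℂ → Matrix dA' dA' ℂ) (hE : IsCPTP Emap)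
    (R : Matrix dA' dA' ℂ → Matrix dA dA ℂ) (hR : IsCPTP R)
    {K : Type*} [Fintype K] (hK : Fintype.card K ≤ Fintype.card dA)
    (p : K → ℝ) (ρs : K → Matrix dA dA ℂ)
    (hp : ∀ k, 0 < p k) (hpsum : ∑ k, p k = 1) (hρs : ∀ k, IsState (ρs k)) :
    Real.sqrt (∑ k, p k * (purifiedDist (ρs k) (R (Emap (ρs k)))) ^ 2)
      ≤ sSup {x : ℝ | ∃ ρ : Matrix (dA × dR) (dA × dR) ℂ, IsState ρ ∧
          x = purifiedDist (tensorId (fun σ => R (Emap σ)) ρ) ρ} :=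
  statement_10_general hdim Emap hE R hR p ρs hp hpsum hρs
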